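/- arXiv:nlin/0411044 — 8 statements merged into one kernel-verified Lean document; each statement's English description precedes it below -/
import Mathlib

section
/- Combinatorial reflection equation at the right end for κ = Rotateleft (Proposition 2.2, equation (2.10)): for every n ≥ 3, all l, m ≥ 0, all d, e ∈ ℤ and all x ∈ B_l, y ∈ B_m, the two composite maps K₂ ∘ R∨ ∘ K₂ ∘ R and R∨∨ ∘ K₂ ∘ R∨ ∘ K₂, both from Aff(B_l)⊗Aff(B_m) to Aff(B∨_l)⊗Aff(B∨_m), take the same value on z^d x ⊗ z^e y. -/
/- Common setup: crystals `B_l`, `B∨_l` for `U_q(sl_n^)`, combinatorial `R`, `R∨`, `R∨∨`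
and the combinatorial `K` maps, following Kuniba–Okado–Yamada,
"Box-Ball System with Reflecting End".  Elements of `B_l` (and of `B∨_l`) are encoded as
integer-valued vectors indexed by `ZMod n` (coordinates read modulo `n`), membership in
`B_l` being expressed by the predicate `memB l`.  The affinization `Aff(B_l)` is encoded
as `ℤ × (ZMod n → ℤ)`, the pair `(d, x)` standing for `z^d x`. -/

namespace BBS

abbrev V (n : ℕ) := ZMod n → ℤ

variable {n : ℕ}

/-- The candidate (for `k+1`, `0 ≤ k ≤ n-1`) in the minimum defining `Q_i(x,y)`:
`Σ_{j=1}^{k} x_{i+j} + Σ_{j=k+2}^{n} y_{i+j}`. -/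
def Qt (x y : V n) (i : ZMod n) (k : ℕ) : ℤ :=
  (∑ j ∈ Finset.range k, x (i + (j : ZMod n) + 1)) +
    ∑ j ∈ Finset.Ico (k + 1) n, y (i + (j : ZMod n) + 1)

/-- `Qe x y i = Q_i(x,y) = min_{1 ≤ k ≤ n} ( Σ_{j=1}^{k−1} x_{i+j} + Σ_{j=k+1}^{n} y_{i+j} )`. -/
def Qe (x y : V n) (i : ZMod n) : ℤ :=
  Finset.fold min (Qt x y i 0) (Qt x y i) (Finset.Ico 1 n)

/-- `Pe x y i = P_i(x,y) = min(x_{i+1}, y_{i+1})`. -/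
def Pe (x y : V n) (i : ZMod n) : ℤ := min (x (i + 1)) (y (i + 1))

/-- Classical combinatorial `R : B_l ⊗ B_m → B_m ⊗ B_l`, `(x,y) ↦ (ỹ,x̃)`. -/
def Rbar (x y : V n) : V n × V n :=
  (fun i => y i + Qe x y (i - 1) - Qe x y i, fun i => x i + Qe x y i - Qe x y (i - 1))

/-- Classical combinatorial `R∨ : B_l ⊗ B∨_m → B∨_m ⊗ B_l`, `(x,y) ↦ (ỹ,x̃)`. -/
def Rvbar (x y : V n) : V n × V n :=
  (fun i => y i + Pe x y i - Pe x y (i - 1), fun i => x i + Pe x y i - Pe x y (i - 1))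

/-- Classical combinatorial `R∨∨ : B∨_l ⊗ B∨_m → B∨_m ⊗ B∨_l`, `(x,y) ↦ (ỹ,x̃)`. -/
def Rvvbar (x y : V n) : V n × V n :=
  (fun i => y i + Qe y x i - Qe y x (i - 1), fun i => x i + Qe y x (i - 1) - Qe y x i)

/-- The affinization: `(d, x)` stands for `z^d x`. -/
abbrev Aff (n : ℕ) := ℤ × V n

/-- Affine combinatorial `R`: `z^d x ⊗ z^e y ↦ z^{e−Q₀(x,y)} ỹ ⊗ z^{d+Q₀(x,y)} x̃`. -/
def Raff (p : Aff n × Aff n) : Aff n × Aff n :=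
  ((p.2.1 - Qe p.1.2 p.2.2 0, (Rbar p.1.2 p.2.2).1),
    (p.1.1 + Qe p.1.2 p.2.2 0, (Rbar p.1.2 p.2.2).2))

/-- Affine combinatorial `R∨`: `z^d x ⊗ z^e y ↦ z^{e−P₀(x,y)} ỹ ⊗ z^{d+P₀(x,y)} x̃`. -/
def Rvee (p : Aff n × Aff n) : Aff n × Aff n :=
  ((p.2.1 - Pe p.1.2 p.2.2 0, (Rvbar p.1.2 p.2.2).1),
    (p.1.1 + Pe p.1.2 p.2.2 0, (Rvbar p.1.2 p.2.2).2))

/-- Affine combinatorial `R∨∨`: `z^d x ⊗ z^e y ↦ z^{e−Q₀(y,x)} ỹ ⊗ z^{d+Q₀(y,x)} x̃`. -/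
def Rvv (p : Aff n × Aff n) : Aff n × Aff n :=
  ((p.2.1 - Qe p.2.2 p.1.2 0, (Rvvbar p.1.2 p.2.2).1),
    (p.1.1 + Qe p.2.2 p.1.2 0, (Rvvbar p.1.2 p.2.2).2))

/-- `κ =` Rotateleft: `κ(x) = (x_2, …, x_n, x_1)`. -/
def rotL (x : V n) : V n := fun i => x (i + 1)

/-- `I` for Rotateleft: `I(x) = −x_1`. -/
def Irot (x : V n) : ℤ := -x 1

/-- `κ =` Switch₁ₙ (`n` even): exchanges the coordinate pairs
`(x_1,x_n), (x_2,x_3), (x_4,x_5), …, (x_{n−2},x_{n−1})`. -/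
def sw1n (x : V n) : V n := fun i => if i.val % 2 = 1 then x (i - 1) else x (i + 1)

/-- `I` for Switch₁ₙ: `I(x) = x_n − x_1`. -/
def I1n (x : V n) : ℤ := x 0 - x 1

/-- `κ =` Switch₁₂ (`n` even): exchanges the coordinate pairs
`(x_1,x_2), (x_3,x_4), …, (x_{n−1},x_n)`. -/
def sw12 (x : V n) : V n := fun i => if i.val % 2 = 1 then x (i + 1) else x (i - 1)

/-- `I` for Switch₁₂: `I(x) = 0`. -/
def I12 (_ : V n) : ℤ := 0

/-- Combinatorial `K : Aff(B_l) → Aff(B∨_l)`, `z^d x ↦ z^{−d+I(x)} κ(x)`. -/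
def Kmap (κ : V n → V n) (I : V n → ℤ) (q : Aff n) : Aff n := (-q.1 + I q.2, κ q.2)

/-- Combinatorial `K∨ : Aff(B∨_l) → Aff(B_l)`, `z^d x ↦ z^{−d−I(x)} κ(x)`. -/
def Kvmap (κ : V n → V n) (I : V n → ℤ) (q : Aff n) : Aff n := (-q.1 - I q.2, κ q.2)

/-- `K₂`: apply `K` to the second tensor factor. -/
def K2 (κ : V n → V n) (I : V n → ℤ) (p : Aff n × Aff n) : Aff n × Aff n :=
  (p.1, Kmap κ I p.2)

/-- `K∨₁`: apply `K∨` to the first tensor factor. -/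
def Kv1 (κ : V n → V n) (I : V n → ℤ) (p : Aff n × Aff n) : Aff n × Aff n :=
  (Kvmap κ I p.1, p.2)

/-- `x ∈ B_l` (equivalently `x ∈ B∨_l`): all coordinates nonnegative, summing to `l`. -/
def memB (l : ℕ) (x : V n) : Prop :=
  (∀ i, 0 ≤ x i) ∧ (∑ j ∈ Finset.range n, x (j : ZMod n)) = (l : ℤ)

end BBS

namespace BBS

section Aux
open Finset


lemma sum_shift (hn : 0 < n) (f : ZMod n → ℤ) (c : ZMod n) :
    ∑ j ∈ range n, f (c + (j:ZMod n)) = ∑ j ∈ range n, f (j:ZMod n) := by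
  haveI : NeZero n := ⟨hn.ne'⟩
  refine Finset.sum_nbij' (fun j => ((c + (j:ZMod n)).val)) (fun j => (((j:ZMod n) - c).val)) ?_ ?_ ?_ ?_ ?_
  · intro a _; exact Finset.mem_range.2 (ZMod.val_lt _)
  · intro a _; exact Finset.mem_range.2 (ZMod.val_lt _)
  · intro a ha; simp [ZMod.natCast_val, ZMod.cast_id, ZMod.val_cast_of_lt (Finset.mem_range.1 ha)]
  · intro a ha; simp [ZMod.natCast_val, ZMod.cast_id, ZMod.val_cast_of_lt (Finset.mem_range.1 ha)]
  · intro a _; simp [ZMod.natCast_val, ZMod.cast_id]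

lemma sum_full (hn : 0 < n) (f : V n) (i : ZMod n) :
    ∑ j ∈ range n, f (i + (j:ZMod n) + 1) = ∑ j ∈ range n, f (j:ZMod n) := by
  rw [← sum_shift hn f (i+1)]
  exact Finset.sum_congr rfl (fun j _ => by ring_nf)

lemma tel (f : ZMod n → ℤ) (c : ZMod n) (k : ℕ) :
    ∑ j ∈ range k, (f (c + (j:ZMod n) + 1) - f (c + (j:ZMod n))) = f (c + (k:ZMod n)) - f c := by
  induction k with
  | zero => simp
  | succ k ih =>
      have h1 : ((k+1 : ℕ) : ZMod n) = (k : ZMod n) + 1 := by push_cast; ring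
      rw [Finset.sum_range_succ, ih, h1, ← add_assoc]; ring

lemma peel (f : V n) (i : ZMod n) (k : ℕ) :
    ∑ j ∈ range (k+1), f (i + (j:ZMod n) + 1) = f (i + 1) + ∑ j ∈ range k, f (i + 1 + (j:ZMod n) + 1) := by
  rw [Finset.sum_range_succ']
  rw [add_comm]
  congr 1
  · simp
  · exact Finset.sum_congr rfl (fun j _ => by push_cast; ring_nf)

lemma Qt_eq (x y : V n) (i : ZMod n) (k : ℕ) (hk : k < n) :
    Qt x y i k = (∑ j ∈ range k, x (i + (j:ZMod n) + 1)) +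
      ((∑ j ∈ range n, y (j:ZMod n)) - ∑ j ∈ range (k+1), y (i + (j:ZMod n) + 1)) := by
  rw [Qt, Finset.sum_Ico_eq_sub _ hk, sum_full (by omega) y i]

lemma R1 (x y : V n) (i : ZMod n) (k : ℕ) (hk : k + 1 < n) :
    Qt x y (i+1) k = Qt x y i (k+1) + y (i+1) - x (i+1) := by
  rw [Qt_eq x y (i+1) k (by omega), Qt_eq x y i (k+1) hk, peel x i k, peel y i (k+1)]
  ring

lemma R2 (hn : 0 < n) (x y : V n) (i : ZMod n) :
    Qt x y i (n-1) = (∑ j ∈ range n, x (j:ZMod n)) - x i := by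
  rw [Qt]
  have h1 : Finset.Ico (n-1+1) n = ∅ := by rw [Finset.Ico_eq_empty]; omega
  rw [h1, Finset.sum_empty, add_zero]
  have h2 : n - 1 + 1 = n := by omega
  have h4 := Finset.sum_range_succ (fun j => x (i + (j:ZMod n) + 1)) (n-1)
  rw [h2] at h4
  have h3 : i + ((n-1 : ℕ) : ZMod n) + 1 = i := by
    rw [add_assoc, show (((n-1:ℕ)) : ZMod n) + 1 = ((n-1+1 : ℕ) : ZMod n) by push_cast; ring,
      h2, ZMod.natCast_self, add_zero]
  rw [h3] at h4
  have h5 := sum_full hn x i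
  omega

lemma R3 (hn : 0 < n) (x y : V n) (i : ZMod n) :
    Qt x y i 0 = (∑ j ∈ range n, y (j:ZMod n)) - y (i+1) := by
  rw [Qt]
  simp only [Finset.range_zero, Finset.sum_empty, zero_add]
  rw [Finset.sum_Ico_eq_sub _ hn, sum_full hn y i]
  simp

lemma Qe_le (x y : V n) (i : ZMod n) (k : ℕ) (hk : k < n) : Qe x y i ≤ Qt x y i k := by
  rw [Qe]
  rcases Nat.eq_zero_or_pos k with h|h
  · subst h; exact (Finset.fold_min_le _).2 (Or.inl le_rfl)
  · exact (Finset.fold_min_le _).2 (Or.inr ⟨k, Finset.mem_Ico.2 ⟨h, hk⟩, le_rfl⟩)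

lemma Qe_exists (x y : V n) (i : ZMod n) (hn : 0 < n) : ∃ k, k < n ∧ Qe x y i = Qt x y i k := by
  have h : Finset.fold min (Qt x y i 0) (Qt x y i) (Finset.Ico 1 n) ≤ Qe x y i := le_of_eq rfl
  rw [Finset.fold_min_le] at h
  rcases h with h | ⟨k, hk, hle⟩
  · exact ⟨0, hn, le_antisymm (Qe_le x y i 0 hn) h⟩
  · rcases Finset.mem_Ico.1 hk with ⟨h1, h2⟩
    exact ⟨k, h2, le_antisymm (Qe_le x y i k h2) hle⟩

lemma star (hn3 : 3 ≤ n) (x y : V n) (i : ZMod n) :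
    min (y (i+1) + Qe x y i) (x (i+2) + Qe x y (i+2)) = Qe x y (i+1) + min (x (i+1)) (y (i+2)) := by
  have h0 : 0 < n := by omega
  have e2 : i + 1 + 1 = i + 2 := by ring
  have e3 : i + 2 + 1 = i + 3 := by ring
  have h1 : min (y (i+1) + Qe x y i) (x (i+2) + Qe x y (i+2)) ≤ Qe x y (i+1) + x (i+1) := by
    obtain ⟨k, hk, he⟩ := Qe_exists x y (i+1) h0
    by_cases hc : k + 1 < n
    · have hr := R1 x y i k hc
      have h2 := Qe_le x y i (k+1) hc
      have h3 : min (y (i+1) + Qe x y i) (x (i+2) + Qe x y (i+2)) ≤ y (i+1) + Qe x y i :=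
        min_le_left _ _
      rw [he, hr]; omega
    · have hk1 : k = n - 1 := by omega
      subst hk1
      rw [he, R2 h0 x y (i+1)]
      have h2 := Qe_le x y (i+2) (n-1) (by omega)
      rw [R2 h0 x y (i+2)] at h2
      have h3 : min (y (i+1) + Qe x y i) (x (i+2) + Qe x y (i+2)) ≤ x (i+2) + Qe x y (i+2) :=
        min_le_right _ _
      omega
  have h2 : min (y (i+1) + Qe x y i) (x (i+2) + Qe x y (i+2)) ≤ Qe x y (i+1) + y (i+2) := by
    obtain ⟨k, hk, he⟩ := Qe_exists x y (i+1) h0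
    rcases Nat.eq_zero_or_pos k with h|h
    · subst h
      rw [he, R3 h0 x y (i+1), e2]
      have h3 := Qe_le x y i 0 h0
      rw [R3 h0 x y i] at h3
      have h4 : min (y (i+1) + Qe x y i) (x (i+2) + Qe x y (i+2)) ≤ y (i+1) + Qe x y i :=
        min_le_left _ _
      omega
    · have hr := R1 x y (i+1) (k-1) (by omega)
      rw [e2, Nat.sub_add_cancel h] at hr
      have h3 := Qe_le x y (i+2) (k-1) (by omega)
      have h4 : min (y (i+1) + Qe x y i) (x (i+2) + Qe x y (i+2)) ≤ x (i+2) + Qe x y (i+2) :=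
        min_le_right _ _
      rw [he]
      omega
  have h3 : Qe x y (i+1) + min (x (i+1)) (y (i+2)) ≤ y (i+1) + Qe x y i := by
    obtain ⟨k, hk, he⟩ := Qe_exists x y i h0
    rcases Nat.eq_zero_or_pos k with h|h
    · subst h
      rw [he, R3 h0 x y i]
      have h4 := Qe_le x y (i+1) 0 h0
      rw [R3 h0 x y (i+1), e2] at h4
      omega
    · have hr := R1 x y i (k-1) (by omega)
      rw [Nat.sub_add_cancel h] at hr
      have h4 := Qe_le x y (i+1) (k-1) (by omega)
      rw [hr] at h4
      rw [he]
      omega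
  have h4 : Qe x y (i+1) + min (x (i+1)) (y (i+2)) ≤ x (i+2) + Qe x y (i+2) := by
    obtain ⟨k, hk, he⟩ := Qe_exists x y (i+2) h0
    by_cases hc : k + 1 < n
    · have hr := R1 x y (i+1) k hc
      rw [e2] at hr
      have h5 := Qe_le x y (i+1) (k+1) hc
      rw [he, hr]
      omega
    · have hk1 : k = n - 1 := by omega
      subst hk1
      rw [he, R2 h0 x y (i+2)]
      have h5 := Qe_le x y (i+1) (n-1) (by omega)
      rw [R2 h0 x y (i+1)] at h5
      omega
  omega

lemma Qe_shift (hn : 0 < n) (x y X Y : V n) (P : ZMod n → ℤ)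
    (hX : ∀ t, X t = x (t+1) + P (t+1) - P t)
    (hY : ∀ t, Y t = y (t+1) + P t - P (t-1)) (i : ZMod n) :
    Qe X Y i = Qe x y (i+1) + (P i - P (i+1)) := by
  have key : ∀ k, k < n → Qt X Y i k = Qt x y (i+1) k + (P i - P (i+1)) := by
    intro k hk
    have hx' : ∀ k', ∑ j ∈ range k', X (i + (j:ZMod n) + 1) =
        (∑ j ∈ range k', x (i + 1 + (j:ZMod n) + 1)) + (P (i + 1 + (k':ZMod n)) - P (i + 1)) := by
      intro k'
      rw [← tel P (i+1) k', ← Finset.sum_add_distrib]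
      exact Finset.sum_congr rfl (fun j _ => by rw [hX]; ring_nf)
    have hy' : ∀ k', ∑ j ∈ range k', Y (i + (j:ZMod n) + 1) =
        (∑ j ∈ range k', y (i + 1 + (j:ZMod n) + 1)) + (P (i + (k':ZMod n)) - P i) := by
      intro k'
      rw [← tel P i k', ← Finset.sum_add_distrib]
      refine Finset.sum_congr rfl (fun j _ => ?_)
      rw [hY]
      have : i + (j:ZMod n) + 1 - 1 = i + (j:ZMod n) := by ring
      rw [this]
      ring_nf
    rw [Qt, Qt, Finset.sum_Ico_eq_sub _ hk, Finset.sum_Ico_eq_sub (fun j => y (i + 1 + (j:ZMod n) + 1)) hk,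
      hx' k, hy' n, hy' (k+1)]
    have hn0 : ((n:ℕ) : ZMod n) = 0 := ZMod.natCast_self n
    rw [hn0, add_zero]
    have : i + ((k+1:ℕ) : ZMod n) = i + 1 + (k:ℕ) := by push_cast; ring
    rw [this]
    ring
  obtain ⟨k1, hk1, e1⟩ := Qe_exists X Y i hn
  obtain ⟨k2, hk2, e2⟩ := Qe_exists x y (i+1) hn
  have l1 := Qe_le X Y i k2 hk2
  rw [key k2 hk2, ← e2] at l1
  have l2 := Qe_le x y (i+1) k1 hk1
  have := key k1 hk1
  rw [e1, this]
  omega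

end Aux

/-- Proposition 2.2, eq. (2.10), `κ =` Rotateleft.
For every `n ≥ 3`, all `l, m ≥ 0`, all `d, e ∈ ℤ`, and all `x ∈ B_l`, `y ∈ B_m`,
the composites `K₂ ∘ R∨ ∘ K₂ ∘ R` and `R∨∨ ∘ K₂ ∘ R∨ ∘ K₂` take the same value on
`z^d x ⊗ z^e y`. -/
theorem reflection_equation_right_rotateleft
    (n : ℕ) (hn : 3 ≤ n) (l m : ℕ) (d e : ℤ) (x y : V n)
    (hx : memB l x) (hy : memB m y) :
    K2 rotL Irot (Rvee (K2 rotL Irot (Raff ((d, x), (e, y))))) =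
      Rvv (K2 rotL Irot (Rvee (K2 rotL Irot ((d, x), (e, y))))) := by
  have h0 : 0 < n := by omega
  simp only [K2, Kmap, Rvee, Raff, Rvv, Rvbar, Rbar, Rvvbar, rotL, Irot]
  have e0 : (1:ZMod n) - 1 = 0 := by ring
  have e1 : ∀ t : ZMod n, t + 1 - 1 = t := fun t => by ring
  have e2 : ∀ t : ZMod n, t - 1 + 1 = t := fun t => by ring
  have hP : ∀ t : ZMod n, Pe (fun i => y i + Qe x y (i - 1) - Qe x y i)
      (rotL fun i => x i + Qe x y i - Qe x y (i - 1)) t = Pe x (rotL y) t := by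
    intro t
    have hs := star hn x y t
    simp only [Pe, rotL]
    rw [e1 t, show t+1+1 = t+2 from by ring, show t+2-1 = t+1 from by ring]
    omega
  have hQ' : ∀ t : ZMod n, Qe (rotL fun i => x i + Pe x (rotL y) i - Pe x (rotL y) (i - 1))
      (fun i => y (i + 1) + Pe x (rotL y) i - Pe x (rotL y) (i - 1)) t
      = Qe x y (t+1) + (Pe x (rotL y) t - Pe x (rotL y) (t+1)) := by
    intro t
    exact Qe_shift h0 x y _ _ (Pe x (rotL y))
      (fun s => by simp only [rotL]; rw [e1 s]) (fun s => rfl) t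
  simp only [hP, hQ']
  simp only [Prod.mk.injEq]
  refine ⟨⟨?_, funext fun i => ?_⟩, ?_, funext fun i => ?_⟩
  · simp only [e0, e1, e2, zero_add]; omega
  · simp only [e0, e1, e2, zero_add]; omega
  · simp only [e0, e1, e2, zero_add]; omega
  · simp only [rotL, e0, e1, e2, zero_add]; omega

end BBS
end

section
/- Lemma A.1, equation (A.2): for every n ≥ 3, all l, m ≥ 0, and each of the three admissible pairs (κ, I) — Rotateleft with κ(x) = (x_2,…,x_n,x_1), I(x) = −x_1 (any n); Switch_{1n} (n even) with κ exchanging the coordinate pairs (x_1,x_n), (x_2,x_3), …, (x_{n−2},x_{n−1}), I(x) = x_n − x_1; Switch_{12} (n even) with κ exchanging the pairs (x_1,x_2), (x_3,x_4), …, (x_{n−1},x_n), I(x) = 0 — the composite (ι ⊗ ι) ∘ K∨₁ ∘ R∨ ∘ K∨₁ ∘ (ι ⊗ ι) equals P ∘ K₂ ∘ R∨ ∘ K₂ ∘ P as maps Aff(B_l)⊗Aff(B_m) → Aff(B∨_m)⊗Aff(B∨_l), where ι(z^d x) = z^{−d} x and P is transposition of tensor factors; explicitly, both composites send z^d x ⊗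 z^e y to z^{−e−p+I(ỹ)} κ(ỹ) ⊗ z^{−d+I(x)−p} w̃, where w = κ(x), p = P₀(w,y), and (ỹ, w̃) is the classical image of (w, y) under R∨. -/
namespace BBS

/-- `ι : Aff(B_l) → Aff(B∨_l)` (and back), `z^d x ↦ z^{−d} x`. -/
def iotaA (q : Aff n) : Aff n := (-q.1, q.2)

/-- `ι ⊗ ι`. -/
def iot2 (p : Aff n × Aff n) : Aff n × Aff n := (iotaA p.1, iotaA p.2)

/-- `P`: transposition of the two tensor factors. -/
def Pswap (p : Aff n × Aff n) : Aff n × Aff n := (p.2, p.1)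

/-- The three admissible pairs `(κ, I)`: Rotateleft (any `n`), Switch₁ₙ (`n` even),
Switch₁₂ (`n` even). -/
def Admissible (κ : V n → V n) (I : V n → ℤ) : Prop :=
  (κ = rotL ∧ I = Irot) ∨ (Even n ∧ κ = sw1n ∧ I = I1n) ∨ (Even n ∧ κ = sw12 ∧ I = I12)

/-- Lemma A.1, eq. (A.2).
For each of the three admissible pairs `(κ, I)`,
`(ι ⊗ ι) ∘ K∨₁ ∘ R∨ ∘ K∨₁ ∘ (ι ⊗ ι) = P ∘ K₂ ∘ R∨ ∘ K₂ ∘ P` on `Aff(B_l) ⊗ Aff(B_m)`;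
explicitly, both composites send `z^d x ⊗ z^e y` to
`z^{−e−p+I(ỹ)} κ(ỹ) ⊗ z^{−d+I(x)−p} w̃`, where `w = κ(x)`, `p = P₀(w,y)`, and
`(ỹ, w̃)` is the classical image of `(w, y)` under `R∨`. -/
theorem lemmaA1_second
    (n : ℕ) (hn : 3 ≤ n) (l m : ℕ) (κ : V n → V n) (I : V n → ℤ)
    (hκI : Admissible κ I) (d e : ℤ) (x y : V n)
    (hx : memB l x) (hy : memB m y) :
    iot2 (Kv1 κ I (Rvee (Kv1 κ I (iot2 ((d, x), (e, y)))))) =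
        Pswap (K2 κ I (Rvee (K2 κ I (Pswap ((d, x), (e, y)))))) ∧
      iot2 (Kv1 κ I (Rvee (Kv1 κ I (iot2 ((d, x), (e, y)))))) =
        ((-e - Pe (κ x) y 0 + I ((Rvbar (κ x) y).1), κ ((Rvbar (κ x) y).1)),
          (-d + I x - Pe (κ x) y 0, (Rvbar (κ x) y).2)) := by
  have hPe : ∀ i, Pe y (κ x) i = Pe (κ x) y i := fun i => min_comm _ _
  constructor <;>
  · simp only [iot2, iotaA, Kv1, Kvmap, Rvee, Rvbar, K2, Kmap, Pswap, hPe, Prod.mk.injEq]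
    refine ⟨⟨by ring, trivial⟩, by ring, trivial⟩

end BBS
end

section
/- The quantity x_i·Q_i(x,y) − y_i·Q_{i−1}(x,y) is independent of i: for all x, y ∈ ℝ^n (indices modulo n, n ≥ 3) and every i, x_i·Q_i(x,y) − y_i·Q_{i−1}(x,y) = x_1·x_2·⋯·x_n − y_1·y_2·⋯·y_n. -/
/- Tropical (geometric-lift) setting for the combinatorial R- and K-matrices of
Kuniba–Okado–Yamada, "Box-Ball System with Reflecting End", Appendix A.
Vectors are real-valued, indexed by `ZMod n` (coordinates modulo `n`), and
`Qr x y i` is the subtraction-free polynomial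
`Q_i(x,y) = Σ_{k=1}^{n} (Π_{j=1}^{k−1} x_{i+j}) (Π_{j=k+1}^{n} y_{i+j})`,
the geometric lift (by `(min,+) → (+,×)`) of the piecewise-linear energy. -/

namespace BBST

abbrev W (n : ℕ) := ZMod n → ℝ

variable {n : ℕ}

/-- The tropical energy polynomial
`Q_i(x,y) = Σ_{k=1}^{n} (Π_{j=1}^{k−1} x_{i+j}) · (Π_{j=k+1}^{n} y_{i+j})`. -/
def Qr (x y : W n) (i : ZMod n) : ℝ :=
  ∑ k ∈ Finset.range n,
    (∏ j ∈ Finset.range k, x (i + (j : ZMod n) + 1)) *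
      ∏ j ∈ Finset.Ico (k + 1) n, y (i + (j : ZMod n) + 1)

end BBST

namespace BBST

variable {n : ℕ}

lemma cycle_prod [NeZero n] (f : ZMod n → ℝ) (i : ZMod n) :
    ∏ j ∈ Finset.range n, f (i + (j : ZMod n)) = ∏ c : ZMod n, f c := by
  refine Finset.prod_nbij (fun j => i + (j : ZMod n)) ?_ ?_ ?_ ?_
  · intro a _; exact Finset.mem_univ _
  · intro a ha b hb hab
    simp only [Finset.coe_range, Set.mem_Iio] at ha hb
    have h : (a : ZMod n) = (b : ZMod n) := add_left_cancel hab
    have := congrArg ZMod.val h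
    rwa [ZMod.val_natCast_of_lt ha, ZMod.val_natCast_of_lt hb] at this
  · intro c _
    refine ⟨(c - i).val, ?_, ?_⟩
    · simp [Finset.mem_coe, Finset.mem_range, ZMod.val_lt]
    · simp [ZMod.natCast_val, ZMod.cast_id]
  · intros; rfl

lemma cycle_prod' [NeZero n] (f : ZMod n → ℝ) (i i' : ZMod n) :
    ∏ j ∈ Finset.range n, f (i + (j : ZMod n)) =
    ∏ j ∈ Finset.range n, f (i' + (j : ZMod n)) := by
  rw [cycle_prod, cycle_prod]

/-- `x_i·Q_i(x,y) − y_i·Q_{i−1}(x,y)` is independent of `i`: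
for all `x, y ∈ ℝ^n` (indices mod `n`, `n ≥ 3`) and every `i`,
`x_i·Q_i(x,y) − y_i·Q_{i−1}(x,y) = x_1⋯x_n − y_1⋯y_n`. -/
theorem Q_telescoping (n : ℕ) (hn : 3 ≤ n) (x y : W n) (i : ZMod n) :
    x i * Qr x y i - y i * Qr x y (i - 1) =
      (∏ j ∈ Finset.range n, x ((j : ZMod n) + 1)) -
        ∏ j ∈ Finset.range n, y ((j : ZMod n) + 1) := by
  haveI : NeZero n := ⟨by omega⟩
  obtain ⟨m, rfl⟩ : ∃ m, n = m + 1 := ⟨n - 1, by omega⟩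
  unfold Qr
  rw [Finset.mul_sum, Finset.mul_sum]
  rw [Finset.sum_range_succ, Finset.sum_range_succ']
  have key : ∀ k ∈ Finset.range m,
      x i * ((∏ j ∈ Finset.range k, x (i + (j : ZMod (m+1)) + 1)) *
        ∏ j ∈ Finset.Ico (k + 1) (m+1), y (i + (j : ZMod (m+1)) + 1)) =
      y i * ((∏ j ∈ Finset.range (k+1), x (i - 1 + (j : ZMod (m+1)) + 1)) *
        ∏ j ∈ Finset.Ico (k + 1 + 1) (m+1), y (i - 1 + (j : ZMod (m+1)) + 1)) := by
    intro k hk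
    rw [Finset.mem_range] at hk
    have hx : ∏ j ∈ Finset.range (k+1), x (i - 1 + (j : ZMod (m+1)) + 1) =
        (∏ j ∈ Finset.range k, x (i + (j : ZMod (m+1)) + 1)) * x i := by
      rw [Finset.prod_range_succ']
      congr 1
      · refine Finset.prod_congr rfl fun j _ => ?_
        congr 1
        push_cast
        ring
      · congr 1
        push_cast
        ring
    have hy : ∏ j ∈ Finset.Ico (k + 1) (m+1), y (i + (j : ZMod (m+1)) + 1) =
        (∏ j ∈ Finset.Ico (k + 1 + 1) (m+1), y (i - 1 + (j : ZMod (m+1)) + 1)) * y i := by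
      rw [Finset.prod_Ico_succ_top (by omega : k + 1 ≤ m)]
      congr 1
      · rw [Finset.prod_Ico_eq_prod_range, Finset.prod_Ico_eq_prod_range]
        have : m - (k+1) = (m+1) - (k+1+1) := by omega
        rw [this]
        refine Finset.prod_congr rfl fun t _ => ?_
        congr 1
        push_cast
        ring
      · congr 1
        have : ((m : ZMod (m+1))) + 1 = 0 := by
          have : (((m+1) : ℕ) : ZMod (m+1)) = 0 := ZMod.natCast_self (m+1)
          push_cast at this ⊢
          linear_combination this
        rw [add_assoc, this, add_zero]
    rw [hx, hy]
    ring
  rw [Finset.sum_congr rfl key]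
  have hxb : x i * ((∏ j ∈ Finset.range m, x (i + (j : ZMod (m+1)) + 1)) *
      ∏ j ∈ Finset.Ico (m + 1) (m+1), y (i + (j : ZMod (m+1)) + 1)) =
      ∏ j ∈ Finset.range (m+1), x ((j : ZMod (m+1)) + 1) := by
    rw [show Finset.Ico (m+1) (m+1) = ∅ from Finset.Ico_self _, Finset.prod_empty, mul_one]
    have h1 : ∏ j ∈ Finset.range (m+1), x (i + (j : ZMod (m+1))) =
        (∏ j ∈ Finset.range m, x (i + (j : ZMod (m+1)) + 1)) * x i := by
      rw [Finset.prod_range_succ']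
      congr 1
      · refine Finset.prod_congr rfl fun j _ => ?_
        congr 1; push_cast; ring
      · congr 1; push_cast; ring
    have h2 : ∏ j ∈ Finset.range (m+1), x ((j : ZMod (m+1)) + 1) =
        ∏ j ∈ Finset.range (m+1), x ((1 : ZMod (m+1)) + (j : ZMod (m+1))) := by
      refine Finset.prod_congr rfl fun j _ => ?_
      congr 1; ring
    rw [h2, ← cycle_prod' x i 1, h1]
    ring
  have hyb : y i * ((∏ j ∈ Finset.range 0, x (i - 1 + (j : ZMod (m+1)) + 1)) *
      ∏ j ∈ Finset.Ico (0 + 1) (m+1), y (i - 1 + (j : ZMod (m+1)) + 1)) =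
      ∏ j ∈ Finset.range (m+1), y ((j : ZMod (m+1)) + 1) := by
    rw [Finset.prod_range_zero, one_mul]
    have h1 : ∏ j ∈ Finset.Ico (0 + 1) (m+1), y (i - 1 + (j : ZMod (m+1)) + 1) =
        ∏ t ∈ Finset.range m, y (i + (t : ZMod (m+1)) + 1) := by
      rw [Finset.prod_Ico_eq_prod_range]
      have : (m+1) - (0 + 1) = m := by omega
      rw [this]
      refine Finset.prod_congr rfl fun t _ => ?_
      congr 1; push_cast; ring
    have h2 : ∏ j ∈ Finset.range (m+1), y (i + (j : ZMod (m+1))) =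
        (∏ t ∈ Finset.range m, y (i + (t : ZMod (m+1)) + 1)) * y i := by
      rw [Finset.prod_range_succ']
      congr 1
      · refine Finset.prod_congr rfl fun j _ => ?_
        congr 1; push_cast; ring
      · congr 1; push_cast; ring
    have h3 : ∏ j ∈ Finset.range (m+1), y ((j : ZMod (m+1)) + 1) =
        ∏ j ∈ Finset.range (m+1), y ((1 : ZMod (m+1)) + (j : ZMod (m+1))) := by
      refine Finset.prod_congr rfl fun j _ => ?_
      congr 1; ring
    rw [h1, h3, ← cycle_prod' y i 1, h2]
    ring
  rw [hxb, hyb]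
  ring

end BBST
end

section
/- Equation (A.5): for all x, y ∈ ℝ^n (indices modulo n, n ≥ 3) and every i, x_{i+1}·Q_{i+1}(x,y) + y_i·Q_{i−1}(x,y) = (x_i + y_{i+1})·Q_i(x,y). -/
namespace BBST

def T (x y : W n) (i : ZMod n) (k : ℕ) : ℝ :=
  (∏ j ∈ Finset.range k, x (i + (j : ZMod n) + 1)) *
      ∏ j ∈ Finset.Ico (k + 1) n, y (i + (j : ZMod n) + 1)

lemma key1 (x y : W n) (i : ZMod n) (k : ℕ) (hk : k + 1 < n) :
    x (i + 1) * T x y (i + 1) k = y (i + 1) * T x y i (k + 1) := by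
  set f : ℕ → ℝ := fun j => x (i + (j : ZMod n) + 1) with hf
  set g : ℕ → ℝ := fun j => y (i + (j : ZMod n) + 1) with hg
  have hx : ∏ j ∈ Finset.range k, x (i + 1 + (j : ZMod n) + 1)
      = ∏ j ∈ Finset.Ico 1 (k + 1), f j := by
    rw [Finset.range_eq_Ico, ← Finset.prod_Ico_add' f 0 k 1]
    exact Finset.prod_congr rfl (fun j _ => by simp only [hf]; push_cast; ring_nf)
  have hy : ∏ j ∈ Finset.Ico (k + 1) n, y (i + 1 + (j : ZMod n) + 1)
      = ∏ j ∈ Finset.Ico (k + 2) (n + 1), g j := by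
    rw [← Finset.prod_Ico_add' g (k + 1) n 1]
    exact Finset.prod_congr rfl (fun j _ => by simp only [hg]; push_cast; ring_nf)
  have hgn : g n = y (i + 1) := by simp [hg]
  have h1 : x (i + 1) * ∏ j ∈ Finset.Ico 1 (k + 1), f j = ∏ j ∈ Finset.range (k + 1), f j := by
    rw [Finset.range_eq_Ico, Finset.prod_eq_prod_Ico_succ_bot (Nat.succ_pos k) f]
    simp [hf]
  have h2 : ∏ j ∈ Finset.Ico (k + 2) (n + 1), g j
      = (∏ j ∈ Finset.Ico (k + 2) n, g j) * y (i + 1) := by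
    rw [Finset.prod_Ico_succ_top (by omega) g, hgn]
  simp only [T, hx, hy]
  rw [h2, ← h1]
  ring

lemma key1' (x y : W n) (i : ZMod n) (hn : 1 ≤ n) :
    x (i + 1) * T x y (i + 1) (n - 1) = x i * T x y i (n - 1) := by
  set f : ℕ → ℝ := fun j => x (i + (j : ZMod n) + 1) with hf
  have hx : ∏ j ∈ Finset.range (n - 1), x (i + 1 + (j : ZMod n) + 1)
      = ∏ j ∈ Finset.Ico 1 n, f j := by
    rw [Finset.range_eq_Ico, show Finset.Ico 1 n = Finset.Ico (0 + 1) (n - 1 + 1) by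
      congr 1; omega, ← Finset.prod_Ico_add' f 0 (n - 1) 1]
    exact Finset.prod_congr rfl (fun j _ => by simp only [hf]; push_cast; ring_nf)
  have hempty : Finset.Ico (n - 1 + 1) n = ∅ := by
    rw [Nat.sub_add_cancel hn]; exact Finset.Ico_self n
  have hcast : ((n - 1 : ℕ) : ZMod n) = -1 := by
    have : ((n - 1 : ℕ) : ZMod n) = (n : ZMod n) - 1 := by push_cast [hn]; ring
    simp [this]
  have h1 : x (i + 1) * ∏ j ∈ Finset.Ico 1 n, f j = ∏ j ∈ Finset.range n, f j := by
    rw [Finset.range_eq_Ico, Finset.prod_eq_prod_Ico_succ_bot hn f]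
    simp [hf]
  have h2 : ∏ j ∈ Finset.range n, f j = (∏ j ∈ Finset.range (n - 1), f j) * x i := by
    conv_lhs => rw [show n = (n - 1) + 1 by omega, Finset.prod_range_succ]
    simp [hf, hcast]
  simp only [T, hx, hempty, Finset.prod_empty, mul_one]
  rw [h1, h2]
  simp only [hf]
  ring

lemma key2 (x y : W n) (i : ZMod n) (k : ℕ) (hk : 1 ≤ k) (hk' : k < n) :
    y i * T x y (i - 1) k = x i * T x y i (k - 1) := by
  set f : ℕ → ℝ := fun j => x (i - 1 + (j : ZMod n) + 1) with hf
  set g : ℕ → ℝ := fun j => y (i - 1 + (j : ZMod n) + 1) with hg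
  -- x-part of T i (k-1) in terms of f
  have hx : ∏ j ∈ Finset.range (k - 1), x (i + (j : ZMod n) + 1)
      = ∏ j ∈ Finset.Ico 1 k, f j := by
    rw [Finset.range_eq_Ico, show Finset.Ico 1 k = Finset.Ico (0 + 1) (k - 1 + 1) by
      congr 1; omega, ← Finset.prod_Ico_add' f 0 (k - 1) 1]
    exact Finset.prod_congr rfl (fun j _ => by simp only [hf]; push_cast; ring_nf)
  have hy : ∏ j ∈ Finset.Ico (k - 1 + 1) n, y (i + (j : ZMod n) + 1)
      = ∏ j ∈ Finset.Ico (k + 1) (n + 1), g j := by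
    rw [Nat.sub_add_cancel hk, ← Finset.prod_Ico_add' g k n 1]
    exact Finset.prod_congr rfl (fun j _ => by simp only [hg]; push_cast; ring_nf)
  have hgn : g n = y i := by simp [hg]
  have hf0 : f 0 = x i := by simp [hf]
  have h1 : ∏ j ∈ Finset.range k, f j = x i * ∏ j ∈ Finset.Ico 1 k, f j := by
    rw [Finset.range_eq_Ico, Finset.prod_eq_prod_Ico_succ_bot (by omega) f, hf0]
  have h2 : ∏ j ∈ Finset.Ico (k + 1) (n + 1), g j
      = (∏ j ∈ Finset.Ico (k + 1) n, g j) * y i := by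
    rw [Finset.prod_Ico_succ_top (by omega) g, hgn]
  simp only [T, hx, hy]
  rw [h1, h2]
  ring

lemma key2' (x y : W n) (i : ZMod n) (hn : 2 ≤ n) :
    y i * T x y (i - 1) 0 = y (i + 1) * T x y i 0 := by
  set g : ℕ → ℝ := fun j => y (i - 1 + (j : ZMod n) + 1) with hg
  have hy : ∏ j ∈ Finset.Ico (0 + 1) n, y (i + (j : ZMod n) + 1)
      = ∏ j ∈ Finset.Ico 2 (n + 1), g j := by
    rw [← Finset.prod_Ico_add' g 1 n 1]
    exact Finset.prod_congr rfl (fun j _ => by simp only [hg]; push_cast; ring_nf)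
  have hgn : g n = y i := by simp [hg]
  have hg1 : g 1 = y (i + 1) := by simp [hg]
  have h1 : ∏ j ∈ Finset.Ico (0 + 1) n, g j = y (i + 1) * ∏ j ∈ Finset.Ico 2 n, g j := by
    rw [Finset.prod_eq_prod_Ico_succ_bot (by omega) g, hg1]
  have h2 : ∏ j ∈ Finset.Ico 2 (n + 1), g j = (∏ j ∈ Finset.Ico 2 n, g j) * y i := by
    rw [Finset.prod_Ico_succ_top (by omega) g, hgn]
  simp only [T, Finset.range_zero, Finset.prod_empty, one_mul, hy]
  rw [h1, h2]
  ring

lemma Qr_eq_sum_T (x y : W n) (i : ZMod n) : Qr x y i = ∑ k ∈ Finset.range n, T x y i k := rfl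

/-- eq. (A.5): for all `x, y ∈ ℝ^n` (indices mod `n`, `n ≥ 3`) and
every `i`, `x_{i+1}·Q_{i+1}(x,y) + y_i·Q_{i−1}(x,y) = (x_i + y_{i+1})·Q_i(x,y)`. -/
theorem eqA5 (n : ℕ) (hn : 3 ≤ n) (x y : W n) (i : ZMod n) :
    x (i + 1) * Qr x y (i + 1) + y i * Qr x y (i - 1) = (x i + y (i + 1)) * Qr x y i := by
  obtain ⟨m, rfl⟩ : ∃ m, n = m + 1 := ⟨n - 1, by omega⟩
  rw [Qr_eq_sum_T, Qr_eq_sum_T, Qr_eq_sum_T, Finset.mul_sum, Finset.mul_sum]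
  have A : ∑ k ∈ Finset.range (m + 1), x (i + 1) * T x y (i + 1) k
      = (∑ k ∈ Finset.range m, y (i + 1) * T x y i (k + 1)) + x i * T x y i m := by
    rw [Finset.sum_range_succ]
    congr 1
    · exact Finset.sum_congr rfl fun k hk => key1 x y i k (by
        simp only [Finset.mem_range] at hk; omega)
    · simpa using key1' x y i (by omega)
  have B : ∑ k ∈ Finset.range (m + 1), y i * T x y (i - 1) k
      = (∑ k ∈ Finset.range m, x i * T x y i k) + y (i + 1) * T x y i 0 := by
    rw [Finset.sum_range_succ']
    congr 1
    · exact Finset.sum_congr rfl fun k hk => by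
        simpa using key2 x y i (k + 1) (by omega) (by
          simp only [Finset.mem_range] at hk; omega)
    · exact key2' x y i (by omega)
  rw [A, B]
  have C := Finset.sum_range_succ (T x y i) m
  have D := Finset.sum_range_succ' (T x y i) m
  have E : (x i + y (i + 1)) * ∑ k ∈ Finset.range (m + 1), T x y i k
      = x i * ((∑ k ∈ Finset.range m, T x y i k) + T x y i m)
        + y (i + 1) * ((∑ k ∈ Finset.range m, T x y i (k + 1)) + T x y i 0) := by
    rw [← C, ← D]; ring
  rw [E]
  simp only [mul_add, Finset.mul_sum]
  ring

end BBST
end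

section
/- Equation (A.6): for all x, y ∈ (ℝ_{>0})^n (indices modulo n, n ≥ 3), define the tropical R image x'_i = x_i·Q_i(x,y)/Q_{i−1}(x,y) and y'_i = y_i·Q_{i−1}(x,y)/Q_i(x,y). Then for every i, x_i + y_{i+1} = x'_{i+1} + y'_i. -/
/-! Reading the coordinates cyclically from position `c + 1` turns `Q_c` into the energy
`Σ_k a_0 ⋯ a_{k-1} b_{k+1} ⋯ b_{m-1}` of a linear word, which obeys a recursion when a letter
is removed from either end. Stripping the letters at positions `i + 1` and `i` from the words
of `Q_{i-1}`, `Q_i`, `Q_{i+1}` writes all three through the same core word, after which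
`x_{i+1} Q_{i+1} + y_i Q_{i-1} = (x_i + y_{i+1}) Q_i` is a polynomial identity; divide by
`Q_i > 0`. -/

namespace BBST

open Finset

def linearQ (a b : ℕ → ℝ) (m : ℕ) : ℝ :=
  ∑ k ∈ range m, (∏ j ∈ range k, a j) * ∏ j ∈ Ico (k + 1) m, b j

lemma linearQ_succ (a b : ℕ → ℝ) (m : ℕ) :
    linearQ a b (m + 1) = linearQ a b m * b m + ∏ j ∈ range m, a j := by
  rw [linearQ, sum_range_succ, Ico_self, prod_empty, mul_one, linearQ, sum_mul]
  congr 1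
  refine sum_congr rfl fun k hk => ?_
  rw [prod_Ico_succ_top (by simpa using hk), mul_assoc]

lemma linearQ_succ' (a b : ℕ → ℝ) (m : ℕ) :
    linearQ a b (m + 1) =
      a 0 * linearQ (fun j => a (j + 1)) (fun j => b (j + 1)) m + ∏ j ∈ range m, b (j + 1) := by
  rw [linearQ, sum_range_succ', prod_range_zero, one_mul, prod_Ico_eq_prod_range, linearQ,
    mul_sum, add_tsub_cancel_right]
  congr 1
  · refine sum_congr rfl fun k _ => ?_
    rw [prod_range_succ', prod_Ico_add' b]
    ring
  · simp_rw [add_comm 1]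

variable {n : ℕ}

def seqFrom (u : W n) (c : ZMod n) : ℕ → ℝ := fun j => u (c + j)

lemma seqFrom_succ (u : W n) (c : ZMod n) (j : ℕ) :
    seqFrom u c (j + 1) = seqFrom u (c + 1) j := by
  simp only [seqFrom]; push_cast; ring_nf

lemma seqFrom_zero (u : W n) (c : ZMod n) : seqFrom u c 0 = u c := by
  simp [seqFrom]

lemma Qr_eq_linearQ (x y : W n) (c : ZMod n) :
    Qr x y c = linearQ (seqFrom x (c + 1)) (seqFrom y (c + 1)) n := by
  simp only [Qr, linearQ, seqFrom, add_right_comm c _ (1 : ZMod n)]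

lemma linearQ_seqFrom_succ' (x y : W n) (c : ZMod n) (m : ℕ) :
    linearQ (seqFrom x c) (seqFrom y c) (m + 1) =
      x c * linearQ (seqFrom x (c + 1)) (seqFrom y (c + 1)) m +
        ∏ j ∈ range m, seqFrom y (c + 1) j := by
  simp only [linearQ_succ', seqFrom_succ, seqFrom_zero]

lemma Qr_recurrence (hn : 2 ≤ n) (x y : W n) (i : ZMod n) :
    x (i + 1) * Qr x y (i + 1) + y i * Qr x y (i - 1) = (x i + y (i + 1)) * Qr x y i := by
  obtain ⟨m, rfl⟩ : ∃ m, n = m + 2 := ⟨n - 2, by omega⟩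
  have hperiod : (m : ZMod (m + 2)) + 2 = 0 := by exact_mod_cast ZMod.natCast_self (m + 2)
  have hend (u : W (m + 2)) : seqFrom u (i + 1 + 1) m = u i := by
    simp only [seqFrom]; congr 1; linear_combination hperiod
  have hwrap (u : W (m + 2)) : seqFrom u (i + 1 + 1) (m + 1) = u (i + 1) := by
    simp only [seqFrom]; congr 1; push_cast; linear_combination hperiod
  -- the core word occupies positions `i + 2, …, i + m + 1 = i - 1`
  set s := linearQ (seqFrom x (i + 1 + 1)) (seqFrom y (i + 1 + 1)) m
  set A := ∏ j ∈ range m, seqFrom x (i + 1 + 1) j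
  set B := ∏ j ∈ range m, seqFrom y (i + 1 + 1) j
  have hQ : Qr x y i = x (i + 1) * (s * y i + A) + B * y i := by
    rw [Qr_eq_linearQ, linearQ_seqFrom_succ', linearQ_succ, prod_range_succ, hend]
  have hQ_succ : Qr x y (i + 1) = (s * y i + A) * y (i + 1) + A * x i := by
    rw [Qr_eq_linearQ, linearQ_succ, linearQ_succ, prod_range_succ, hend, hend, hwrap]
  have hQ_pred : Qr x y (i - 1) = x i * (x (i + 1) * s + B) + B * y (i + 1) := by
    rw [Qr_eq_linearQ, sub_add_cancel, linearQ_seqFrom_succ', linearQ_seqFrom_succ',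
      prod_range_succ', seqFrom_zero]
    simp only [seqFrom_succ, s, B]
  rw [hQ, hQ_succ, hQ_pred]
  ring

lemma Qr_pos (hn : 0 < n) (x y : W n) (hx : ∀ i, 0 < x i) (hy : ∀ i, 0 < y i) (i : ZMod n) :
    0 < Qr x y i :=
  sum_pos (fun _ _ => mul_pos (prod_pos fun _ _ => hx _) (prod_pos fun _ _ => hy _))
    (nonempty_range_iff.mpr hn.ne')

/-- eq. (A.6): for all positive `x, y ∈ ℝ^n`, with tropical `R`-image
`x'_i = x_i·Q_i/Q_{i−1}`, `y'_i = y_i·Q_{i−1}/Q_i`, one has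
`x_i + y_{i+1} = x'_{i+1} + y'_i` for every `i`. -/
theorem eqA6 (n : ℕ) (hn : 3 ≤ n) (x y : W n)
    (hx : ∀ i, 0 < x i) (hy : ∀ i, 0 < y i) (i : ZMod n) :
    x i + y (i + 1) =
      x (i + 1) * Qr x y (i + 1) / Qr x y i + y i * Qr x y (i - 1) / Qr x y i := by
  rw [← add_div, eq_div_iff (Qr_pos (by omega) x y hx hy i).ne']
  linear_combination -Qr_recurrence (by omega) x y i

end BBST
end

section
/- Equation (A.10) (Rotateleft case): for all x, y ∈ (ℝ_{>0})^n (indices modulo n, n ≥ 3), define x**_i = x_{i+1}·(x_{i+2}+y_{i+3})/(x_{i+1}+y_{i+2}) and y**_i = y_{i+1}·(x_{i+1}+y_{i+2})/(x_i+y_{i+1}). Then for every i, Q_i(x**, y**) = ((x_{i+1}+y_{i+2})/(x_{i+2}+y_{i+3}))·Q_{i+1}(x,y). -/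
namespace BBST

private lemma keyl (a b c : ℝ) (ha : a ≠ 0) : a / b * (c / a) = c / b := by
  rw [div_mul_div_comm, mul_comm b a, mul_div_mul_left _ _ ha]

private lemma keyl2 (a b c : ℝ) (hb : b ≠ 0) : a / b * (b / c) = a / c := by
  rw [div_mul_div_comm, mul_comm a b, mul_div_mul_left _ _ hb]

private lemma tele' (g : ℕ → ℝ) (hg : ∀ j, g j ≠ 0) (k : ℕ) :
    ∏ j ∈ Finset.range k, g (j + 1) / g j = g k / g 0 := by
  induction k with
  | zero => rw [Finset.prod_range_zero, div_self (hg 0)]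
  | succ k ih =>
    rw [Finset.prod_range_succ, ih, mul_comm, keyl2 _ _ _ (hg k)]

private lemma teleIco (g : ℕ → ℝ) (hg : ∀ j, g j ≠ 0) (a b : ℕ) (hab : a ≤ b) :
    ∏ j ∈ Finset.Ico a b, g (j + 1) / g j = g b / g a := by
  rw [Finset.prod_Ico_eq_prod_range]
  have := tele' (fun j => g (a + j)) (fun j => hg _) (b - a)
  simpa [Nat.add_sub_cancel' hab, add_assoc, add_comm 1] using this

/-- eq. (A.10), Rotateleft case: for all positive `x, y ∈ ℝ^n`, with
`x**_i = x_{i+1}·(x_{i+2}+y_{i+3})/(x_{i+1}+y_{i+2})` and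
`y**_i = y_{i+1}·(x_{i+1}+y_{i+2})/(x_i+y_{i+1})`, one has, for every `i`,
`Q_i(x**, y**) = ((x_{i+1}+y_{i+2})/(x_{i+2}+y_{i+3}))·Q_{i+1}(x,y)`. -/
theorem eqA10 (n : ℕ) (hn : 3 ≤ n) (x y : W n)
    (hx : ∀ i, 0 < x i) (hy : ∀ i, 0 < y i)
    (xss yss : W n)
    (hxss : xss = fun a => x (a + 1) * (x (a + 2) + y (a + 3)) / (x (a + 1) + y (a + 2)))
    (hyss : yss = fun a => y (a + 1) * (x (a + 1) + y (a + 2)) / (x a + y (a + 1)))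
    (i : ZMod n) :
    Qr xss yss i = (x (i + 1) + y (i + 2)) / (x (i + 2) + y (i + 3)) * Qr x y (i + 1) := by
  set g : ℕ → ℝ := fun j => x (i + (j : ZMod n) + 1) + y (i + (j : ZMod n) + 2) with hg_def
  have hg : ∀ j, g j ≠ 0 := fun j => (add_pos (hx _) (hy _)).ne'
  have hgn : g n = g 0 := by simp [hg_def]
  have hxe : ∀ j : ℕ, xss (i + (j : ZMod n) + 1)
      = x (i + 1 + (j : ZMod n) + 1) * (g (j + 2) / g (j + 1)) := by
    intro j
    subst hxss
    simp only [hg_def]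
    push_cast
    rw [mul_div_assoc]
    ring_nf
  have hye : ∀ j : ℕ, yss (i + (j : ZMod n) + 1)
      = y (i + 1 + (j : ZMod n) + 1) * (g (j + 1) / g j) := by
    intro j
    subst hyss
    simp only [hg_def]
    push_cast
    rw [mul_div_assoc]
    ring_nf
  have hxy : (x (i + 1) + y (i + 2)) / (x (i + 2) + y (i + 3)) = g 0 / g 1 := by
    simp only [hg_def]
    push_cast
    ring_nf
  unfold Qr
  rw [Finset.mul_sum]
  refine Finset.sum_congr rfl fun k hk => ?_
  have hkn : k + 1 ≤ n := Finset.mem_range.mp hk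
  rw [Finset.prod_congr rfl fun j _ => hxe j, Finset.prod_congr rfl fun j _ => hye j,
    Finset.prod_mul_distrib, Finset.prod_mul_distrib,
    teleIco g hg (k + 1) n hkn, hgn]
  have h1 : ∏ j ∈ Finset.range k, g (j + 2) / g (j + 1) = g (k + 1) / g 1 := by
    simpa using tele' (fun j => g (j + 1)) (fun j => hg _) k
  rw [h1, hxy, mul_mul_mul_comm, keyl _ _ _ (hg (k + 1)), mul_comm]

end BBST
end

section
/- Lemma A.3, Switch_{1n} case: let n ≥ 4 be even and x, y ∈ (ℝ_{>0})^n (indices modulo n). Let ī denote the involution pairing (n,1), (2,3), (4,5), …, (n−2,n−1), i.e. ī = i−1 for i odd and ī = i+1 for i even (so 1̄ = n and n̄ = 1). Set α_i = x_i + y_ī, x**_i = x_ī·α_{ī+1}/α_ī and y**_i = y_ī·α_{i+1}/α_i. Then Q_i(x**, y**) = Q_i(x,y) for every odd i, and Q_i(x**, y**) = (x_{i+1}+y_i)·(x_i·Q_{i+1}(x,y) + y_{i+1}·Q_{i−1}(x,y)) / ((x_i+y_{i+1})·(x_{i+2}+y_{i+3})) for every even i. -/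
/-!
The energies satisfy the cyclic first-order recurrence
`x_{i+1} Q_{i+1} + ∏ y = y_{i+1} Q_i + ∏ x`, and when `∏ x ≠ ∏ y` it has only one solution:
going once around the cycle multiplies the difference of two solutions by `∏ y / ∏ x`.
The switch preserves `∏ x` and `∏ y` (since `i ↦ ī` is a bijection), and the claimed values
satisfy the recurrence of `(x**, y**)`: at each index this is a linear combination of the
recurrences for `Q` at two consecutive indices. The case `∏ x = ∏ y` follows by continuity,
replacing `y` by `t • y` and letting `t → 1⁺`.
-/

namespace BBST

open Finset

section CyclicProducts

variable {n : ℕ} {M : Type*} [CommMonoid M]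

theorem prod_range_add_natCast [NeZero n] (f : ZMod n → M) (i : ZMod n) :
    ∏ k ∈ range n, f (i + k) = ∏ j, f j := by
  refine prod_nbij' (fun k => i + k) (fun j => (j - i).val) (by simp)
    (fun j _ => mem_range.2 (ZMod.val_lt _)) (fun k hk => ?_) (by simp) fun _ _ => rfl
  simp [ZMod.val_cast_of_lt (mem_range.1 hk)]

theorem mul_prod_range_add_one (f : ZMod n → M) (i : ZMod n) (k : ℕ) :
    f (i + 1) * ∏ j ∈ range k, f (i + 1 + j + 1) = ∏ j ∈ range (k + 1), f (i + j + 1) := by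
  rw [prod_range_succ', mul_comm]
  congr 1
  · exact prod_congr rfl fun j _ => by push_cast; ring_nf
  · simp

theorem prod_Ico_add_one {k : ℕ} (hk : k + 2 ≤ n) (f : ZMod n → M) (i : ZMod n) :
    ∏ j ∈ Ico (k + 1) n, f (i + 1 + j + 1) =
      (∏ j ∈ Ico (k + 2) n, f (i + j + 1)) * f (i + 1) := by
  have hshift := prod_Ico_add' (fun j : ℕ => f (i + j + 1)) (k + 1) n 1
  rw [prod_Ico_succ_top (by omega), ZMod.natCast_self, add_zero] at hshift
  rw [← hshift]
  exact prod_congr rfl fun j _ => by push_cast; ring_nf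

end CyclicProducts

variable {n : ℕ}

def QrTerm (x y : W n) (i : ZMod n) (k : ℕ) : ℝ :=
  (∏ j ∈ range k, x (i + j + 1)) * ∏ j ∈ Ico (k + 1) n, y (i + j + 1)

theorem y_mul_QrTerm_succ {k : ℕ} (hk : k + 2 ≤ n) (x y : W n) (i : ZMod n) :
    y (i + 1) * QrTerm x y i (k + 1) = x (i + 1) * QrTerm x y (i + 1) k := by
  rw [QrTerm, QrTerm, ← mul_prod_range_add_one, prod_Ico_add_one hk]
  ring

theorem y_mul_QrTerm_zero [NeZero n] (x y : W n) (i : ZMod n) :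
    y (i + 1) * QrTerm x y i 0 = ∏ j, y j := by
  rw [QrTerm, prod_range_zero, one_mul, ← prod_range_add_natCast y (i + 1), range_eq_Ico,
    prod_eq_prod_Ico_succ_bot (Nat.pos_of_neZero n)]
  congr 1
  · simp
  · exact prod_congr rfl fun j _ => by ring_nf

theorem x_mul_QrTerm_last [NeZero n] (x y : W n) (i : ZMod n) :
    x (i + 1) * QrTerm x y (i + 1) (n - 1) = ∏ j, x j := by
  rw [QrTerm, Nat.sub_add_cancel NeZero.one_le, Ico_self, prod_empty, mul_one,
    mul_prod_range_add_one, Nat.sub_add_cancel NeZero.one_le, ← prod_range_add_natCast x (i + 1)]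
  exact prod_congr rfl fun j _ => by ring_nf

theorem x_mul_Qr_succ_add_prod [NeZero n] (x y : W n) (i : ZMod n) :
    x (i + 1) * Qr x y (i + 1) + ∏ j, y j = y (i + 1) * Qr x y i + ∏ j, x j := by
  obtain ⟨m, rfl⟩ : ∃ m, n = m + 1 := ⟨n - 1, (Nat.sub_add_cancel NeZero.one_le).symm⟩
  change x (i + 1) * ∑ k ∈ range (m + 1), QrTerm x y (i + 1) k + _ =
    y (i + 1) * ∑ k ∈ range (m + 1), QrTerm x y i k + _
  rw [sum_range_succ, sum_range_succ', mul_add, mul_add, mul_sum, mul_sum, y_mul_QrTerm_zero,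
    ← x_mul_QrTerm_last x y i, Nat.add_sub_cancel,
    sum_congr rfl fun k hk => y_mul_QrTerm_succ (by simp at hk; omega) x y i]
  ring

section Uniqueness

variable {R : Type*} [CommRing R]

theorem prod_mul_eq_prod_mul_of_mul_succ_eq {a b d : ZMod n → R}
    (h : ∀ i, a (i + 1) * d (i + 1) = b (i + 1) * d i) (i : ZMod n) (k : ℕ) :
    (∏ l ∈ range k, b (i + l + 1)) * d i = (∏ l ∈ range k, a (i + l + 1)) * d (i + k) := by
  induction k with
  | zero => simp
  | succ k ih =>
    rw [prod_range_succ, prod_range_succ, Nat.cast_succ, ← add_assoc]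
    linear_combination b (i + k + 1) * ih - (∏ l ∈ range k, a (i + l + 1)) * h (i + k)

theorem eq_zero_of_mul_succ_eq [NoZeroDivisors R] [NeZero n] {a b d : ZMod n → R}
    (h : ∀ i, a (i + 1) * d (i + 1) = b (i + 1) * d i) (hab : ∏ i, a i ≠ ∏ i, b i) :
    d = 0 := by
  funext i
  have hcycle := prod_mul_eq_prod_mul_of_mul_succ_eq h i n
  simp only [ZMod.natCast_self, add_zero, add_right_comm i _ 1, prod_range_add_natCast] at hcycle
  by_contra hi
  exact hab (mul_right_cancel₀ hi hcycle).symm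

end Uniqueness

theorem Qr_eq_of_rec [NeZero n] {x y q : W n} (hxy : ∏ i, x i ≠ ∏ i, y i)
    (hq : ∀ i, x (i + 1) * q (i + 1) + ∏ j, y j = y (i + 1) * q i + ∏ j, x j) : Qr x y = q := by
  have hd := eq_zero_of_mul_succ_eq (d := Qr x y - q)
    (fun i => by
      simp only [Pi.sub_apply]
      linear_combination x_mul_Qr_succ_add_prod x y i - hq i) hxy
  exact sub_eq_zero.1 hd

section Switch

-- `partner`, `alpha`, `switchX`, `switchY` are the paper's `ī`, `α`, `x**`, `y**`; the paper's
-- index `n` is `0` here, so `partner` pairs `0` with `1`.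
def partner (i : ZMod n) : ZMod n := if i.val % 2 = 1 then i - 1 else i + 1

def alpha (x y : W n) (i : ZMod n) : ℝ := x i + y (partner i)

noncomputable def switchX (x y : W n) (i : ZMod n) : ℝ :=
  x (partner i) * alpha x y (partner i + 1) / alpha x y (partner i)

noncomputable def switchY (x y : W n) (i : ZMod n) : ℝ :=
  y (partner i) * alpha x y (i + 1) / alpha x y i

noncomputable def switchedQr (x y : W n) (i : ZMod n) : ℝ :=
  if i.val % 2 = 1 then Qr x y i
  else (x (i + 1) + y i) * (x i * Qr x y (i + 1) + y (i + 1) * Qr x y (i - 1)) /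
    ((x i + y (i + 1)) * (x (i + 2) + y (i + 3)))

theorem partner_of_even {i : ZMod n} (hi : i.val % 2 = 0) : partner i = i + 1 := by
  simp [partner, hi]

theorem partner_of_odd {i : ZMod n} (hi : i.val % 2 = 1) : partner i = i - 1 := by
  simp [partner, hi]

theorem alpha_of_even (x y : W n) {i : ZMod n} (hi : i.val % 2 = 0) :
    alpha x y i = x i + y (i + 1) := by
  rw [alpha, partner_of_even hi]

theorem prod_alpha_add_one [NeZero n] (x y : W n) :
    ∏ i, alpha x y (i + 1) = ∏ i, alpha x y i :=
  Fintype.prod_equiv (Equiv.addRight 1) _ _ fun _ => rfl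

theorem prod_alpha_ne_zero [NeZero n] {x y : W n} (hxy : ∀ a b, x a + y b ≠ 0) :
    ∏ i, alpha x y i ≠ 0 :=
  prod_ne_zero_iff.2 fun _ _ => hxy _ _

variable [NeZero n] (h2n : 2 ∣ n)
include h2n

theorem val_add_one_mod_two (i : ZMod n) : (i + 1).val % 2 = (i.val + 1) % 2 := by
  have : Fact (1 < n) := ⟨by have := Nat.le_of_dvd (Nat.pos_of_neZero n) h2n; omega⟩
  rw [ZMod.val_add, ZMod.val_one, Nat.mod_mod_of_dvd _ h2n]

theorem val_add_one_mod_two_of_even {i : ZMod n} (hi : i.val % 2 = 0) :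
    (i + 1).val % 2 = 1 := by
  rw [val_add_one_mod_two h2n]
  omega

theorem val_add_two_mod_two_of_even {i : ZMod n} (hi : i.val % 2 = 0) :
    (i + 2).val % 2 = 0 := by
  have := val_add_one_mod_two_of_even h2n hi
  rw [← one_add_one_eq_two, ← add_assoc, val_add_one_mod_two h2n]
  omega

theorem val_sub_one_mod_two_of_even {i : ZMod n} (hi : i.val % 2 = 0) :
    (i - 1).val % 2 = 1 := by
  have := val_add_one_mod_two h2n (i - 1)
  rw [sub_add_cancel] at this
  omega

theorem partner_add_one_of_even {i : ZMod n} (hi : i.val % 2 = 0) : partner (i + 1) = i := by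
  simp [partner, val_add_one_mod_two_of_even h2n hi]

theorem partner_involutive : Function.Involutive (partner (n := n)) := by
  intro i
  rcases Nat.mod_two_eq_zero_or_one i.val with hi | hi
  · rw [partner_of_even hi, partner_add_one_of_even h2n hi]
  · have hi' : (i - 1).val % 2 = 0 := by
      have := val_add_one_mod_two h2n (i - 1)
      rw [sub_add_cancel] at this
      omega
    rw [partner_of_odd hi, partner_of_even hi', sub_add_cancel]

theorem alpha_add_one_of_even (x y : W n) {i : ZMod n} (hi : i.val % 2 = 0) :
    alpha x y (i + 1) = x (i + 1) + y i := by
  rw [alpha, partner_add_one_of_even h2n hi]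

variable {x y : W n} (hxy : ∀ a b, x a + y b ≠ 0)
include hxy

theorem switchedQr_rec_of_even {j : ZMod n} (hj : j.val % 2 = 0) :
    switchX x y (j + 1) * switchedQr x y (j + 1) + ∏ i, y i =
      switchY x y (j + 1) * switchedQr x y j + ∏ i, x i := by
  have hrec := x_mul_Qr_succ_add_prod x y j
  have hrec_pred := x_mul_Qr_succ_add_prod x y (j - 1)
  rw [sub_add_cancel] at hrec_pred
  rw [switchX, switchY, partner_add_one_of_even h2n hj, alpha_add_one_of_even h2n x y hj,
    alpha_of_even x y hj, add_assoc, one_add_one_eq_two,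
    alpha_of_even x y (val_add_two_mod_two_of_even h2n hj), switchedQr, switchedQr,
    if_pos (val_add_one_mod_two_of_even h2n hj), if_neg (by omega), add_assoc,
    two_add_one_eq_three]
  field_simp [hxy]
  linear_combination x j * hrec + y (j + 1) * hrec_pred

theorem switchedQr_rec_sub_one_of_even {j : ZMod n} (hj : j.val % 2 = 0) :
    switchX x y j * switchedQr x y j + ∏ i, y i =
      switchY x y j * switchedQr x y (j - 1) + ∏ i, x i := by
  have hrec := x_mul_Qr_succ_add_prod x y j
  have hrec_pred := x_mul_Qr_succ_add_prod x y (j - 1)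
  rw [sub_add_cancel] at hrec_pred
  rw [switchX, switchY, partner_of_even hj, alpha_add_one_of_even h2n x y hj,
    alpha_of_even x y hj, add_assoc, one_add_one_eq_two,
    alpha_of_even x y (val_add_two_mod_two_of_even h2n hj), switchedQr, switchedQr,
    if_pos (val_sub_one_mod_two_of_even h2n hj), if_neg (by omega), add_assoc,
    two_add_one_eq_three]
  field_simp [hxy]
  linear_combination x j * hrec + y (j + 1) * hrec_pred

theorem switchedQr_rec (i : ZMod n) :
    switchX x y (i + 1) * switchedQr x y (i + 1) + ∏ j, y j =
      switchY x y (i + 1) * switchedQr x y i + ∏ j, x j := by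
  rcases Nat.mod_two_eq_zero_or_one i.val with hi | hi
  · exact switchedQr_rec_of_even h2n hxy hi
  · have hi' : (i + 1).val % 2 = 0 := by rw [val_add_one_mod_two h2n]; omega
    simpa only [add_sub_cancel_right] using switchedQr_rec_sub_one_of_even h2n hxy hi'

theorem prod_switchX : ∏ i, switchX x y i = ∏ i, x i := by
  have hσ := (partner_involutive h2n).bijective
  simp only [switchX, prod_div_distrib, prod_mul_distrib]
  rw [hσ.prod_comp x, hσ.prod_comp (fun j => alpha x y (j + 1)), hσ.prod_comp (alpha x y),
    prod_alpha_add_one, mul_div_cancel_right₀ _ (prod_alpha_ne_zero hxy)]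

theorem prod_switchY : ∏ i, switchY x y i = ∏ i, y i := by
  simp only [switchY, prod_div_distrib, prod_mul_distrib]
  rw [(partner_involutive h2n).bijective.prod_comp y, prod_alpha_add_one,
    mul_div_cancel_right₀ _ (prod_alpha_ne_zero hxy)]

theorem Qr_switch_of_prod_ne (hne : ∏ i, x i ≠ ∏ i, y i) :
    Qr (switchX x y) (switchY x y) = switchedQr x y := by
  refine Qr_eq_of_rec (by rwa [prod_switchX h2n hxy, prod_switchY h2n hxy]) fun i => ?_
  rw [prod_switchX h2n hxy, prod_switchY h2n hxy]
  exact switchedQr_rec h2n hxy i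

end Switch

theorem continuous_Qr (i : ZMod n) : Continuous fun p : W n × W n => Qr p.1 p.2 i := by
  unfold Qr
  fun_prop

theorem continuousAt_switch_smul [NeZero n] {x y : W n} (hxy : ∀ a b, x a + y b ≠ 0) :
    ContinuousAt (fun t : ℝ => (switchX x (t • y), switchY x (t • y))) 1 := by
  refine .prodMk (continuousAt_pi.2 fun j => ?_) (continuousAt_pi.2 fun j => ?_) <;>
  · simp only [switchX, switchY, alpha, Pi.smul_apply, smul_eq_mul]
    fun_prop (disch := simpa using hxy _ _)

theorem continuousAt_switchedQr_smul {x y : W n} (hxy : ∀ a b, x a + y b ≠ 0) (i : ZMod n) :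
    ContinuousAt (fun t : ℝ => switchedQr x (t • y) i) 1 := by
  have hQ : ∀ j, Continuous fun t : ℝ => Qr x (t • y) j :=
    fun j => (continuous_Qr j).comp (f := fun t : ℝ => (x, t • y)) (by fun_prop)
  unfold switchedQr
  split_ifs
  · exact (hQ i).continuousAt
  · simp only [Pi.smul_apply, smul_eq_mul]
    fun_prop (disch := simpa using mul_ne_zero (hxy _ _) (hxy _ _))

open Filter Topology in
theorem Qr_switch [NeZero n] (h2n : 2 ∣ n) {x y : W n} (hx : ∀ i, 0 < x i) (hy : ∀ i, 0 < y i) :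
    Qr (switchX x y) (switchY x y) = switchedQr x y := by
  have hsum : ∀ t : ℝ, 0 < t → ∀ a b, x a + (t • y) b ≠ 0 :=
    fun t ht a b => (add_pos (hx a) (mul_pos ht (hy b))).ne'
  have hsum₁ : ∀ a b, x a + y b ≠ 0 := by simpa using hsum 1 one_pos
  rcases ne_or_eq (∏ i, x i) (∏ i, y i) with hne | hne
  · exact Qr_switch_of_prod_ne h2n hsum₁ hne
  funext i
  have heq : (fun t : ℝ => Qr (switchX x (t • y)) (switchY x (t • y)) i) =ᶠ[𝓝[>] 1]
      fun t => switchedQr x (t • y) i := by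
    filter_upwards [self_mem_nhdsWithin] with t (ht : 1 < t)
    refine congrFun (Qr_switch_of_prod_ne h2n (hsum t (by linarith)) ?_) i
    have hprod : ∏ i, (t • y) i = t ^ n * ∏ i, y i := by
      simp [prod_mul_distrib]
    have hy₀ : 0 < ∏ i, y i := prod_pos fun i _ => hy i
    have ht₁ : 1 < t ^ n := one_lt_pow₀ ht (NeZero.ne n)
    rw [hprod, hne]
    nlinarith
  have hF := ((continuous_Qr i).continuousAt.comp (continuousAt_switch_smul hsum₁)).tendsto
  have hG := (continuousAt_switchedQr_smul hsum₁ i).tendsto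
  simpa using tendsto_nhds_unique_of_eventuallyEq (hF.mono_left nhdsWithin_le_nhds)
    (hG.mono_left nhdsWithin_le_nhds) heq

/-- Lemma A.3, Switch₁ₙ case: let `n ≥ 4` be even and
`x, y ∈ (ℝ_{>0})^n`.  With the involution `ī` pairing `(n,1), (2,3), (4,5), …, (n−2,n−1)`,
`α_i = x_i + y_ī`, `x**_i = x_ī·α_{ī+1}/α_ī` and `y**_i = y_ī·α_{i+1}/α_i`, one has
`Q_i(x**, y**) = Q_i(x,y)` for every odd `i`, and
`Q_i(x**, y**) = (x_{i+1}+y_i)·(x_i·Q_{i+1} + y_{i+1}·Q_{i−1}) / ((x_i+y_{i+1})·(x_{i+2}+y_{i+3}))`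
for every even `i`. -/
theorem lemmaA3_switch1n (n : ℕ) (hn : 4 ≤ n) (hev : Even n) (x y : W n)
    (hx : ∀ i, 0 < x i) (hy : ∀ i, 0 < y i)
    (bar : ZMod n → ZMod n) (hbar : bar = fun i => if i.val % 2 = 1 then i - 1 else i + 1)
    (α : ZMod n → ℝ) (hα : α = fun i => x i + y (bar i))
    (xss yss : W n)
    (hxss : xss = fun i => x (bar i) * α (bar i + 1) / α (bar i))
    (hyss : yss = fun i => y (bar i) * α (i + 1) / α i) :
    (∀ i : ZMod n, i.val % 2 = 1 → Qr xss yss i = Qr x y i) ∧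
      ∀ i : ZMod n, i.val % 2 = 0 →
        Qr xss yss i =
          (x (i + 1) + y i) * (x i * Qr x y (i + 1) + y (i + 1) * Qr x y (i - 1)) /
            ((x i + y (i + 1)) * (x (i + 2) + y (i + 3))) := by
  have : NeZero n := ⟨by omega⟩
  subst hbar hα hxss hyss
  have h := congrFun (Qr_switch hev.two_dvd hx hy)
  exact ⟨fun i hi => (h i).trans (if_pos hi), fun i hi => (h i).trans (if_neg (by omega))⟩

end BBST
end

section
/- Stability of the combinatorial R under large coordinates (used in the proof of Proposition 3.3): fix n ≥ 3 and an index i. For every y ∈ (ℤ≥0)^n there exists N ∈ ℕ (indeed N = y_1+⋯+y_n works) such that for every x ∈ (ℤ≥0)^n with x_i ≥ N: (a) Q_a(x + e_i, y) = Q_a(x, y) for every a, where e_i is the i-th standard unit vector; consequently (b) writing ōR(x,y) = (ỹ, x̃) with ỹ_a = y_a + Q_{a−1}(x,y) − Q_a(x,y) and x̃_a = x_a + Q_a(x,y) − Q_{a−1}(x,y), one has ōR(x+e_i, y) = (ỹ, x̃+e_i). Symmetrically, for every x there exists N' such that for all y with y_i ≥ N', ōR(x, y+e_i) = (ỹ+e_i,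 x̃). -/
namespace BBS

/-- The `i`-th standard unit vector. -/
def eV (i : ZMod n) : V n := fun a => if a = i then 1 else 0

end BBS

/-! In the candidate `Qt x y a k` of the minimum defining `Q_a(x, y)`, the coordinate `i` is read
through `x` when `k` exceeds the offset `m` of `i` from `a`, through `y` when `k < m`, and not at
all when `k = m`. So adding `e_i` to `x` raises exactly the candidates with `k > m` by one, while
the `m`-th one stays put; once `x_i ≥ y_1 + ⋯ + y_n` the `m`-th candidate is already below every
candidate with `k > m`, so the minimum does not move. As `ōR` only sees differences of the `Q_a`,
it then carries `e_i` straight through. The case of a large `y_i` is symmetric. -/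

theorem Finset.inf'_eq_inf'_of_le_of_eq {ι α : Type*} [LinearOrder α] {s : Finset ι}
    (hs : s.Nonempty) {f g : ι → α} {m : ι} (hm : m ∈ s) (hfg : ∀ k ∈ s, f k ≤ g k)
    (hgm : g m = f m) (hmin : ∀ k ∈ s, f k ≠ g k → f m ≤ f k) :
    s.inf' hs g = s.inf' hs f := by
  refine le_antisymm (Finset.le_inf' _ _ fun k hk => ?_) (Finset.inf'_mono_fun hfg)
  by_cases hk' : f k = g k
  · exact hk' ▸ Finset.inf'_le _ hk
  · calc s.inf' hs g ≤ g m := Finset.inf'_le _ hm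
      _ = f m := hgm
      _ ≤ f k := hmin k hk hk'

namespace BBS

variable {n : ℕ}

theorem sum_range_natCast_eq_sum_univ {M : Type*} [AddCommMonoid M] [NeZero n]
    (z : ZMod n → M) :
    ∑ j ∈ Finset.range n, z (j : ZMod n) = ∑ c : ZMod n, z c :=
  Finset.sum_bij' (fun j _ => (j : ZMod n)) (fun c _ => c.val) (fun _ _ => Finset.mem_univ _)
    (fun c _ => Finset.mem_range.2 (ZMod.val_lt c))
    (fun _ hj => ZMod.val_cast_of_lt (Finset.mem_range.1 hj))
    (fun c _ => ZMod.natCast_rightInverse c) (fun _ _ => rfl)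

theorem sum_range_add_natCast_add_one {M : Type*} [AddCommMonoid M] [NeZero n]
    (z : ZMod n → M) (a : ZMod n) :
    ∑ j ∈ Finset.range n, z (a + (j : ZMod n) + 1) = ∑ j ∈ Finset.range n, z (j : ZMod n) := by
  rw [sum_range_natCast_eq_sum_univ (fun c => z (a + c + 1)), sum_range_natCast_eq_sum_univ z]
  exact Fintype.sum_equiv ((Equiv.addRight 1).trans (Equiv.addLeft a)) _ _
    fun c => by simp [add_assoc]

theorem Qe_eq_inf' [NeZero n] (x y : V n) (a : ZMod n) :
    Qe x y a = (Finset.range n).inf' (Finset.nonempty_range_iff.2 (NeZero.ne n)) (Qt x y a) := by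
  have hrange : Finset.range n = insert 0 (Finset.Ico 1 n) := by
    rw [Finset.range_eq_Ico, ← Finset.insert_Ico_add_one_left_eq_Ico (Nat.pos_of_neZero n),
      zero_add]
  refine eq_of_forall_le_iff fun c => ?_
  rw [Qe, Finset.le_fold_min, Finset.le_inf'_iff, hrange, Finset.forall_mem_insert]

def offset (a i : ZMod n) : ℕ := (i - a - 1).val

theorem offset_lt [NeZero n] (a i : ZMod n) : offset a i < n := ZMod.val_lt _

theorem add_natCast_add_one_eq_iff [NeZero n] {a i : ZMod n} {j : ℕ} (hj : j < n) :
    a + (j : ZMod n) + 1 = i ↔ j = offset a i := by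
  constructor
  · rintro rfl
    rw [offset, show a + (j : ZMod n) + 1 - a - 1 = j by ring, ZMod.val_cast_of_lt hj]
  · rintro rfl
    rw [offset, ZMod.natCast_zmod_val]
    ring

theorem add_offset_add_one [NeZero n] (a i : ZMod n) : a + (offset a i : ZMod n) + 1 = i :=
  (add_natCast_add_one_eq_iff (offset_lt a i)).2 rfl

theorem sum_eV_add_natCast_add_one [NeZero n] (i a : ZMod n) {s : Finset ℕ}
    (hs : ∀ j ∈ s, j < n) :
    ∑ j ∈ s, eV i (a + (j : ZMod n) + 1) = if offset a i ∈ s then 1 else 0 := by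
  rw [← Finset.sum_ite_eq' s (offset a i) fun _ => (1 : ℤ)]
  exact Finset.sum_congr rfl fun j hj => if_congr (add_natCast_add_one_eq_iff (hs j hj)) rfl rfl

theorem Qt_add_eV_left [NeZero n] (x y : V n) (i a : ZMod n) {k : ℕ} (hk : k ≤ n) :
    Qt (x + eV i) y a k = Qt x y a k + if offset a i < k then 1 else 0 := by
  simp only [Qt, Pi.add_apply, Finset.sum_add_distrib,
    sum_eV_add_natCast_add_one i a fun j hj => (Finset.mem_range.1 hj).trans_le hk,
    Finset.mem_range]
  ring

theorem Qt_add_eV_right [NeZero n] (x y : V n) (i a : ZMod n) (k : ℕ) :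
    Qt x (y + eV i) a k = Qt x y a k + if k < offset a i then 1 else 0 := by
  simp only [Qt, Pi.add_apply, Finset.sum_add_distrib,
    sum_eV_add_natCast_add_one i a fun j hj => (Finset.mem_Ico.1 hj).2, Finset.mem_Ico,
    offset_lt, and_true, Nat.succ_le_iff]
  ring

theorem Qt_offset_le_of_offset_lt [NeZero n] {x y : V n} (hx : ∀ j, 0 ≤ x j)
    (hy : ∀ j, 0 ≤ y j) {i : ZMod n} (hxi : ∑ j ∈ Finset.range n, y (j : ZMod n) ≤ x i)
    (a : ZMod n) {k : ℕ} (hk : offset a i < k) : Qt x y a (offset a i) ≤ Qt x y a k := by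
  set m := offset a i
  calc Qt x y a m
      ≤ ∑ j ∈ Finset.range m, x (a + (j : ZMod n) + 1) + ∑ j ∈ Finset.range n, y (j : ZMod n) := by
        rw [Qt, ← sum_range_add_natCast_add_one y a]
        gcongr
        · exact fun _ _ _ => hy _
        · exact fun j hj => Finset.mem_range.2 (Finset.mem_Ico.1 hj).2
    _ ≤ ∑ j ∈ Finset.range m, x (a + (j : ZMod n) + 1) + x i := by gcongr
    _ = ∑ j ∈ Finset.range (m + 1), x (a + (j : ZMod n) + 1) := by
        rw [Finset.sum_range_succ, add_offset_add_one]
    _ ≤ ∑ j ∈ Finset.range k, x (a + (j : ZMod n) + 1) :=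
        Finset.sum_le_sum_of_subset_of_nonneg (Finset.range_subset_range.2 hk)
          fun _ _ _ => hx _
    _ ≤ Qt x y a k := le_add_of_nonneg_right (Finset.sum_nonneg fun _ _ => hy _)

theorem Qt_offset_le_of_lt_offset [NeZero n] {x y : V n} (hx : ∀ j, 0 ≤ x j)
    (hy : ∀ j, 0 ≤ y j) {i : ZMod n} (hyi : ∑ j ∈ Finset.range n, x (j : ZMod n) ≤ y i)
    (a : ZMod n) {k : ℕ} (hk : k < offset a i) : Qt x y a (offset a i) ≤ Qt x y a k := by
  set m := offset a i
  have hm : m < n := offset_lt a i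
  calc Qt x y a m
      ≤ ∑ j ∈ Finset.range n, x (j : ZMod n) +
          ∑ j ∈ Finset.Ico (m + 1) n, y (a + (j : ZMod n) + 1) := by
        rw [Qt, ← sum_range_add_natCast_add_one x a]
        gcongr
        exact fun _ _ _ => hx _
    _ ≤ y i + ∑ j ∈ Finset.Ico (m + 1) n, y (a + (j : ZMod n) + 1) := by gcongr
    _ = ∑ j ∈ Finset.Ico m n, y (a + (j : ZMod n) + 1) := by
        rw [← Finset.insert_Ico_add_one_left_eq_Ico hm, Finset.sum_insert (by simp),
          add_offset_add_one]
    _ ≤ ∑ j ∈ Finset.Ico (k + 1) n, y (a + (j : ZMod n) + 1) :=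
        Finset.sum_le_sum_of_subset_of_nonneg (Finset.Ico_subset_Ico_left hk)
          fun _ _ _ => hy _
    _ ≤ Qt x y a k := le_add_of_nonneg_left (Finset.sum_nonneg fun _ _ => hx _)

theorem Qe_add_eV_left [NeZero n] {x y : V n} (hx : ∀ j, 0 ≤ x j) (hy : ∀ j, 0 ≤ y j)
    {i : ZMod n} (hxi : ∑ j ∈ Finset.range n, y (j : ZMod n) ≤ x i) (a : ZMod n) :
    Qe (x + eV i) y a = Qe x y a := by
  have hQt : ∀ k ∈ Finset.range n,
      Qt (x + eV i) y a k = Qt x y a k + if offset a i < k then 1 else 0 :=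
    fun k hk => Qt_add_eV_left x y i a (Finset.mem_range.1 hk).le
  rw [Qe_eq_inf', Qe_eq_inf']
  refine Finset.inf'_eq_inf'_of_le_of_eq _ (Finset.mem_range.2 (offset_lt a i))
    (fun k hk => ?_) ?_ fun k hk hne => Qt_offset_le_of_offset_lt hx hy hxi a ?_
  · rw [hQt k hk]
    split_ifs <;> simp
  · simp [hQt _ (Finset.mem_range.2 (offset_lt a i))]
  · by_contra h
    simp [hQt k hk, h] at hne

theorem Qe_add_eV_right [NeZero n] {x y : V n} (hx : ∀ j, 0 ≤ x j) (hy : ∀ j, 0 ≤ y j)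
    {i : ZMod n} (hyi : ∑ j ∈ Finset.range n, x (j : ZMod n) ≤ y i) (a : ZMod n) :
    Qe x (y + eV i) a = Qe x y a := by
  rw [Qe_eq_inf', Qe_eq_inf']
  refine Finset.inf'_eq_inf'_of_le_of_eq _ (Finset.mem_range.2 (offset_lt a i))
    (fun k _ => ?_) ?_ fun k _ hne => Qt_offset_le_of_lt_offset hx hy hyi a ?_
  · rw [Qt_add_eV_right]
    split_ifs <;> simp
  · simp [Qt_add_eV_right]
  · by_contra h
    simp [Qt_add_eV_right, h] at hne

theorem Rbar_add_left_of_Qe_eq {x y d : V n} (h : ∀ a, Qe (x + d) y a = Qe x y a) :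
    Rbar (x + d) y = ((Rbar x y).1, (Rbar x y).2 + d) := by
  ext a
  · simp only [Rbar, h]
  · simp only [Rbar, h, Pi.add_apply]
    ring

theorem Rbar_add_right_of_Qe_eq {x y d : V n} (h : ∀ a, Qe x (y + d) a = Qe x y a) :
    Rbar x (y + d) = ((Rbar x y).1 + d, (Rbar x y).2) := by
  ext a
  · simp only [Rbar, h, Pi.add_apply]
    ring
  · simp only [Rbar, h]

/-- stability of the combinatorial `R` under large coordinates.
Fix `n ≥ 3` and an index `i`.  For every `y ∈ (ℤ≥0)^n`, the bound `N = y_1+⋯+y_n` works: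
for every `x ∈ (ℤ≥0)^n` with `x_i ≥ N`, (a) `Q_a(x+e_i, y) = Q_a(x, y)` for every `a`,
and consequently (b) `ōR(x+e_i, y) = (ỹ, x̃+e_i)` where `ōR(x,y) = (ỹ, x̃)`.
Symmetrically, for every `x` there exists `N'` such that for all `y` with `y_i ≥ N'`,
`ōR(x, y+e_i) = (ỹ+e_i, x̃)`. -/
theorem R_stability (n : ℕ) (hn : 3 ≤ n) (i : ZMod n) :
    (∀ y : V n, (∀ j, 0 ≤ y j) →
      ∀ x : V n, (∀ j, 0 ≤ x j) →
        (∑ j ∈ Finset.range n, y (j : ZMod n)) ≤ x i →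
          (∀ a, Qe (x + eV i) y a = Qe x y a) ∧
            Rbar (x + eV i) y = ((Rbar x y).1, (Rbar x y).2 + eV i)) ∧
      ∀ x : V n, (∀ j, 0 ≤ x j) →
        ∃ N' : ℤ, ∀ y : V n, (∀ j, 0 ≤ y j) → N' ≤ y i →
          Rbar x (y + eV i) = ((Rbar x y).1 + eV i, (Rbar x y).2) := by
  have : NeZero n := ⟨by omega⟩
  refine ⟨fun y hy x hx hxi => ?_, fun x hx =>
    ⟨∑ j ∈ Finset.range n, x (j : ZMod n), fun y hy hyi => ?_⟩⟩
  · have hQe := Qe_add_eV_left hx hy hxi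
    exact ⟨hQe, Rbar_add_left_of_Qe_eq hQe⟩
  · exact Rbar_add_right_of_Qe_eq (Qe_add_eV_right hx hy hyi)

end BBS
end
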